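/- Let $\Omega^\varepsilon \subset \mathbb{R}^d$ be $\varepsilon$-scale flat with modulus $\zeta$, and suppose $r \zeta(r,\varepsilon/r)$ is nondecreasing in $r$ and $\zeta \le 1/4$. Then for $\varepsilon \le r_1 \le r_2 \le 1$, the unit normals $n_{r_1}, n_{r_2}$ at a common boundary point $y \in \partial\Omega^\varepsilon$ satisfy $|n_{r_1} - n_{r_2}| \le C \frac{r_2 \zeta(r_2, \varepsilon/r_2)}{r_1}$, where $C$ depends only on the dimension $d$. -/
import Mathlib


open MeasureTheory RealInnerProductSpace

/-- `Ω` is `ε`-scale flat with modulus `ζ` and approximate unit outward normals `n r y`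
at every boundary point `y` and scale `r ∈ (ε, 1]`. -/
def IsEpsScaleFlat (d : ℕ) (Ω : Set (EuclideanSpace ℝ (Fin d))) (ε : ℝ) (ζ : ℝ → ℝ → ℝ)
    (n : ℝ → EuclideanSpace ℝ (Fin d) → EuclideanSpace ℝ (Fin d)) : Prop :=
  ∀ y ∈ frontier Ω, ∀ r ∈ Set.Ioc ε 1,
    ‖n r y‖ = 1 ∧
    (Metric.ball y r ∩ {x | ⟪x - y, n r y⟫ < -(r * ζ r (ε / r))} ⊆ Ω ∩ Metric.ball y r) ∧
    (Ω ∩ Metric.ball y r ⊆ Metric.ball y r ∩ {x | ⟪x - y, n r y⟫ < r * ζ r (ε / r)})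

set_option maxHeartbeats 8000000 in
/-- Stability of the approximate normal across scales: if `Ω` is `ε`-scale flat with modulus
`ζ`, `r ↦ r ζ(r, ε/r)` is nondecreasing and `ζ ≤ 1/4`, then for `ε < r₁ ≤ r₂ ≤ 1` the unit
normals at a common boundary point satisfy `|n_{r₁} - n_{r₂}| ≤ C r₂ ζ(r₂, ε/r₂) / r₁`, with
`C = C(d)`. -/
theorem stmt7 (d : ℕ) : ∃ C > 0,
    ∀ (Ω : Set (EuclideanSpace ℝ (Fin d))) (ε : ℝ) (ζ : ℝ → ℝ → ℝ)
      (n : ℝ → EuclideanSpace ℝ (Fin d) → EuclideanSpace ℝ (Fin d)),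
      0 < ε → ε < 1 →
      Bornology.IsBounded Ω →
      IsEpsScaleFlat d Ω ε ζ n →
      (∀ r s, 0 ≤ ζ r s) →
      (∀ r ∈ Set.Ioc ε 1, ζ r (ε / r) ≤ 1 / 4) →
      (∀ r ∈ Set.Ioc ε 1, ∀ r' ∈ Set.Ioc ε 1, r ≤ r' →
        r * ζ r (ε / r) ≤ r' * ζ r' (ε / r')) →
      ∀ y ∈ frontier Ω, ∀ r₁ r₂ : ℝ, ε < r₁ → r₁ ≤ r₂ → r₂ ≤ 1 →
        ‖n r₁ y - n r₂ y‖ ≤ C * (r₂ * ζ r₂ (ε / r₂)) / r₁ := by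
  refine ⟨32, by norm_num, ?_⟩
  intro Ω ε ζ n hε hε1 hbd hflat hζ0 hζ14 hmono y hy r₁ r₂ hr₁ hr12 hr₂1
  have hr₁pos : 0 < r₁ := hε.trans hr₁
  have hr₁m : r₁ ∈ Set.Ioc ε 1 := ⟨hr₁, hr12.trans hr₂1⟩
  have hr₂m : r₂ ∈ Set.Ioc ε 1 := ⟨hr₁.trans_le hr12, hr₂1⟩
  obtain ⟨hn₁, hsub₁, hsup₁⟩ := hflat y hy r₁ hr₁m
  obtain ⟨hn₂, hsub₂, hsup₂⟩ := hflat y hy r₂ hr₂m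
  set n₁ := n r₁ y with hn1def
  set n₂ := n r₂ y with hn2def
  set ζ₁ : ℝ := r₁ * ζ r₁ (ε / r₁) with hz1def
  set ζ₂ : ℝ := r₂ * ζ r₂ (ε / r₂) with hz2def
  have hζ₁nn : 0 ≤ ζ₁ := mul_nonneg hr₁pos.le (hζ0 _ _)
  have hζ₂nn : 0 ≤ ζ₂ := mul_nonneg (hr₁pos.trans_le hr12).le (hζ0 _ _)
  have hζ₁le : ζ₁ ≤ r₁ / 4 := by
    have h := hζ14 r₁ hr₁m
    rw [hz1def]
    nlinarith
  have hζ12 : ζ₁ ≤ ζ₂ := hmono r₁ hr₁m r₂ hr₂m hr12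
  -- Key implication from the two slab inclusions
  have key : ∀ u : EuclideanSpace ℝ (Fin d), ‖u‖ < r₁ → ⟪u, n₁⟫ < -ζ₁ → ⟪u, n₂⟫ < ζ₂ := by
    intro u hu hinner
    have hx : (y + u) ∈ Ω ∩ Metric.ball y r₁ := by
      apply hsub₁
      refine ⟨?_, ?_⟩
      · rw [Metric.mem_ball, dist_eq_norm, add_sub_cancel_left]
        exact hu
      · simpa [add_sub_cancel_left] using hinner
    have hx2 : (y + u) ∈ Ω ∩ Metric.ball y r₂ := ⟨hx.1, Metric.ball_subset_ball hr12 hx.2⟩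
    have h := (hsup₂ hx2).2
    simpa [add_sub_cancel_left] using h
  obtain ⟨c, hcdef⟩ : ∃ c : ℝ, c = ⟪n₁, n₂⟫ := ⟨_, rfl⟩
  have h11 : ⟪n₁, n₁⟫ = 1 := by rw [real_inner_self_eq_norm_sq, hn₁]; norm_num
  have h22 : ⟪n₂, n₂⟫ = 1 := by rw [real_inner_self_eq_norm_sq, hn₂]; norm_num
  have h21 : ⟪n₂, n₁⟫ = c := by rw [real_inner_comm]; exact hcdef.symm
  have h12 : ⟪n₁, n₂⟫ = c := hcdef.symm
  have hc_le : c ≤ 1 := by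
    have h := real_inner_le_norm n₁ n₂
    rw [hn₁, hn₂, one_mul, h12] at h
    exact h
  -- lower bound on c
  have hc_lb : -(r₁ / 2) * c < ζ₂ := by
    have h := key ((-(r₁ / 2)) • n₁) ?_ ?_
    · rwa [real_inner_smul_left, h12] at h
    · rw [norm_smul, hn₁, mul_one, Real.norm_eq_abs, abs_neg, abs_of_nonneg (by positivity)]
      linarith
    · rw [real_inner_smul_left, h11]
      nlinarith
  -- orthogonal component
  set m : EuclideanSpace ℝ (Fin d) := n₂ - c • n₁ with hmdef
  have hmn₁ : ⟪m, n₁⟫ = 0 := by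
    rw [hmdef, inner_sub_left, real_inner_smul_left, h11, h21]; ring
  have hn₁m : ⟪n₁, m⟫ = 0 := by rw [real_inner_comm]; exact hmn₁
  have hmsq : ‖m‖ ^ 2 = 1 - c ^ 2 := by
    have : ‖m‖ ^ 2 = ⟪m, m⟫ := (real_inner_self_eq_norm_sq m).symm
    rw [this, hmdef, inner_sub_right, inner_sub_left, inner_sub_left,
      real_inner_smul_left, real_inner_smul_left, real_inner_smul_right,
      real_inner_smul_right, h11, h22, h21, h12]
    ring
  have hmn₂ : ⟪m, n₂⟫ = ‖m‖ ^ 2 := by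
    rw [hmdef, inner_sub_left, real_inner_smul_left, h22, h12, hmsq]; ring
  -- bound on ‖m‖
  have hm_bd : ‖m‖ ≤ 4 * ζ₂ / r₁ := by
    rcases eq_or_lt_of_le (norm_nonneg m) with hm0 | hmpos
    · rw [← hm0]; positivity
    apply le_of_forall_pos_le_add
    intro η hη
    set δ : ℝ := min (η * r₁ / 2) (r₁ / 8) with hδdef
    have hδpos : 0 < δ := lt_min (by positivity) (by positivity)
    have hδle : δ ≤ r₁ / 8 := min_le_right _ _
    have hδle' : δ ≤ η * r₁ / 2 := min_le_left _ _
    set a : ℝ := r₁ / (2 * ‖m‖) with hadef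
    have hapos : 0 < a := by positivity
    set u : EuclideanSpace ℝ (Fin d) := a • m - (ζ₁ + δ) • n₁ with hudef
    have hum : ⟪u, n₁⟫ = -(ζ₁ + δ) := by
      rw [hudef, inner_sub_left, real_inner_smul_left, real_inner_smul_left, hmn₁, h11]
      ring
    have ham : ‖a • m‖ = r₁ / 2 := by
      rw [norm_smul, Real.norm_eq_abs, abs_of_nonneg hapos.le, hadef]
      field_simp
    have husq : ‖u‖ ^ 2 = (r₁ / 2) ^ 2 + (ζ₁ + δ) ^ 2 := by
      rw [hudef, @norm_sub_sq_real, ham, real_inner_smul_left, real_inner_smul_right, hmn₁,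
        norm_smul, Real.norm_eq_abs, abs_of_nonneg (by linarith : (0:ℝ) ≤ ζ₁ + δ), hn₁]
      ring
    have hunorm : ‖u‖ < r₁ := by
      nlinarith [norm_nonneg u]
    have huinner : ⟪u, n₁⟫ < -ζ₁ := by rw [hum]; linarith
    have h := key u hunorm huinner
    have hun₂ : ⟪u, n₂⟫ = (r₁ / 2) * ‖m‖ - (ζ₁ + δ) * c := by
      rw [hudef, inner_sub_left, real_inner_smul_left, real_inner_smul_left, hmn₂, h12, hadef]
      field_simp
    rw [hun₂] at h
    have h1 : (ζ₁ + δ) * c ≤ ζ₁ + δ := by nlinarith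
    have h2 : (r₁ / 2) * ‖m‖ < ζ₂ + ζ₁ + δ := by linarith
    have h3 : ‖m‖ < (2 * ζ₂ + 2 * ζ₁ + 2 * δ) / r₁ := by
      rw [lt_div_iff₀ hr₁pos]
      nlinarith
    have h4 : (2 * ζ₂ + 2 * ζ₁ + 2 * δ) / r₁ ≤ 4 * ζ₂ / r₁ + η := by
      rw [div_add' _ _ _ (ne_of_gt hr₁pos), div_le_div_iff₀ hr₁pos hr₁pos]
      nlinarith
    linarith
  -- conclusion
  have hnormsq : ‖n₁ - n₂‖ ^ 2 = 2 - 2 * c := by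
    rw [@norm_sub_sq_real, hn₁, hn₂, h12]
    ring
  rcases le_or_gt ζ₂ (r₁ / 16) with hcase | hcase
  · -- small case: c ≥ -1/8
    have hc8 : -(1 / 8 : ℝ) ≤ c := by nlinarith
    have hrhs : (0:ℝ) ≤ 8 * ζ₂ / r₁ := by positivity
    have hsq : ‖n₁ - n₂‖ ^ 2 ≤ (8 * ζ₂ / r₁) ^ 2 := by
      have h1 : ‖n₁ - n₂‖ ^ 2 ≤ 4 * ‖m‖ ^ 2 := by
        rw [hnormsq, hmsq]; nlinarith
      have h2 : ‖m‖ ^ 2 ≤ (4 * ζ₂ / r₁) ^ 2 := pow_le_pow_left₀ (norm_nonneg m) hm_bd 2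
      have h3 : (4:ℝ) * (4 * ζ₂ / r₁) ^ 2 = (8 * ζ₂ / r₁) ^ 2 := by ring
      linarith
    have hfin : ‖n₁ - n₂‖ ≤ 8 * ζ₂ / r₁ :=
      (pow_le_pow_iff_left₀ (norm_nonneg _) hrhs two_ne_zero).mp hsq
    have hmono' : 8 * ζ₂ / r₁ ≤ 32 * ζ₂ / r₁ := by
      rw [div_le_div_iff₀ hr₁pos hr₁pos]
      nlinarith
    linarith
  · -- trivial case
    have h2 : ‖n₁ - n₂‖ ≤ 2 := by
      calc ‖n₁ - n₂‖ ≤ ‖n₁‖ + ‖n₂‖ := norm_sub_le _ _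
        _ = 2 := by rw [hn₁, hn₂]; norm_num
    have : (2 : ℝ) ≤ 32 * ζ₂ / r₁ := by
      rw [le_div_iff₀ hr₁pos]
      linarith
    linarith
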